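/- If an arm t satisfies μ[t] ≥ μ[s] + ε for all s < t (it is 'convincingly in the skyline'), then every ε'-skyline S with ε' < ε must contain t. -/

import Mathlib

def IsSkyline (n : ℕ) (μ : ℕ → ℝ) (ε : ℝ) (S : Finset ℕ) : Prop :=
  S ⊆ Finset.Icc 1 n ∧
  (∀ t ∈ Finset.Icc 1 n, t ∉ S →
      ∃ s ∈ S, s < t ∧ (∀ s' ∈ S, s' < t → s' ≤ s) ∧ μ s ≥ μ t - ε) ∧
  (∀ s ∈ S, ∀ t ∈ Finset.Icc 1 n, t ≤ s → μ s ≥ μ t - ε)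

theorem IsSkyline.exists_lt_le_add_of_notMem {n : ℕ} {μ : ℕ → ℝ} {ε : ℝ} {S : Finset ℕ}
    (hS : IsSkyline n μ ε S) {t : ℕ} (ht : t ∈ Finset.Icc 1 n) (htS : t ∉ S) :
    ∃ s ∈ Finset.Icc 1 n, s < t ∧ μ t ≤ μ s + ε := by
  obtain ⟨s, hsS, hst, -, hμs⟩ := hS.2.1 t ht htS
  exact ⟨s, hS.1 hsS, hst, by linarith⟩

theorem convincingly_in_skyline_mem_general (n : ℕ) (μ : ℕ → ℝ)
    (t : ℕ) (ht : t ∈ Finset.Icc 1 n)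
    (ε ε' : ℝ) (hlt : ε' < ε)
    (hconv : ∀ s ∈ Finset.Icc 1 n, s < t → μ t ≥ μ s + ε)
    (S : Finset ℕ) (hS : IsSkyline n μ ε' S) :
    t ∈ S := by
  by_contra htS
  obtain ⟨s, hs, hst, hμs⟩ := hS.exists_lt_le_add_of_notMem ht htS
  linarith [hconv s hs hst]

/-- If arm `t` is convincingly in the skyline (`μ t ≥ μ s + ε` for all `s < t`),
then every `ε'`-skyline with `ε' < ε` contains `t`. -/
theorem convincingly_in_skyline_mem (n : ℕ) (μ : ℕ → ℝ)
    (hμ : ∀ i ∈ Finset.Icc 1 n, μ i ∈ Set.Icc (0 : ℝ) 1)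
    (t : ℕ) (ht : t ∈ Finset.Icc 1 n)
    (ε ε' : ℝ) (hε' : 0 ≤ ε') (hlt : ε' < ε)
    (hconv : ∀ s ∈ Finset.Icc 1 n, s < t → μ t ≥ μ s + ε)
    (S : Finset ℕ) (hS : IsSkyline n μ ε' S) :
    t ∈ S :=
  convincingly_in_skyline_mem_general n μ t ht ε ε' hlt hconv S hS
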